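/- arXiv:1301.4886 — 5 statements merged into one kernel-verified Lean document; each statement's English description precedes it below -/
import Mathlib

section
/- The system of functions {(ln x)^n : n ∈ ℕ} is complete in L²(0,1), i.e., the closed linear span of {x ↦ (log x)^n : n ≥ 0} equals L²(0,1). -/
/-!
Let `g ∈ L²(0,1)` be orthogonal to every `(log x)ⁿ` and put `F(s) = ∫₀¹ xˢ g(x) dx`. Since
`xᵃ |log x|ᵏ ∈ L²(0,1)` for `a > -1/2`, `F` is holomorphic on `Re s > -1/2` with
`F⁽ⁿ⁾(s) = ∫₀¹ xˢ (log x)ⁿ g(x) dx`. All derivatives of `F` vanish at `0`, so `F = 0` on the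
half-plane by the identity theorem; in particular every moment `F(n) = ∫₀¹ xⁿ g(x) dx` vanishes.
By Weierstrass approximation `g` then integrates to zero against every smooth test function,
hence `g = 0`.
-/

open MeasureTheory Set Filter Topology

local notation "μ01" => volume.restrict (Ioo (0:ℝ) 1)

namespace LogPowCompleteness

section MomentProblem

variable {E : Type*} [NormedAddCommGroup E] [NormedSpace ℝ E]
  {μ : Measure ℝ} {a b : ℝ} {g : ℝ → E}

theorem integrable_continuous_smul (hμ : ∀ᵐ x ∂μ, x ∈ Icc a b) (hg : Integrable g μ)
    {φ : ℝ → ℝ} (hφ : Continuous φ) : Integrable (fun x => φ x • g x) μ := by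
  obtain ⟨C, hC⟩ := isCompact_Icc.exists_bound_of_continuousOn hφ.continuousOn
  refine (hg.norm.const_mul C).mono' (hφ.aestronglyMeasurable.smul hg.1) ?_
  filter_upwards [hμ] with x hx
  rw [norm_smul]
  exact mul_le_mul_of_nonneg_right (hC x hx) (norm_nonneg _)

theorem integral_polynomial_eval_smul_eq_zero (hμ : ∀ᵐ x ∂μ, x ∈ Icc a b)
    (hg : Integrable g μ) (h : ∀ n : ℕ, ∫ x, x ^ n • g x ∂μ = 0) (p : Polynomial ℝ) :
    ∫ x, p.eval x • g x ∂μ = 0 := by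
  simp_rw [Polynomial.eval_eq_sum_range, Finset.sum_smul, mul_smul]
  have hint (i : ℕ) : Integrable (fun x => p.coeff i • x ^ i • g x) μ :=
    (integrable_continuous_smul hμ hg (continuous_pow i)).smul (p.coeff i)
  rw [integral_finsetSum _ fun i _ => hint i]
  simp [integral_smul, h]

theorem integral_continuous_smul_eq_zero (hμ : ∀ᵐ x ∂μ, x ∈ Icc a b) (hg : Integrable g μ)
    (h : ∀ n : ℕ, ∫ x, x ^ n • g x ∂μ = 0) {φ : ℝ → ℝ} (hφ : Continuous φ) :
    ∫ x, φ x • g x ∂μ = 0 := by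
  set M := ∫ x, ‖g x‖ ∂μ
  have hM : 0 ≤ M := integral_nonneg fun x => norm_nonneg _
  refine norm_le_zero_iff.mp (le_of_forall_pos_le_add fun ε hε => ?_)
  obtain ⟨p, hp⟩ := exists_polynomial_near_of_continuousOn a b φ hφ.continuousOn
    (ε / (M + 1)) (by positivity)
  have hpφ : ∫ x, φ x • g x ∂μ = ∫ x, (φ x - p.eval x) • g x ∂μ := by
    simp_rw [sub_smul]
    rw [integral_sub (integrable_continuous_smul hμ hg hφ)
      (integrable_continuous_smul hμ hg p.continuous),
      integral_polynomial_eval_smul_eq_zero hμ hg h, sub_zero]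
  calc ‖∫ x, φ x • g x ∂μ‖
      ≤ ∫ x, ε / (M + 1) * ‖g x‖ ∂μ := by
        rw [hpφ]
        refine norm_integral_le_of_norm_le (hg.norm.const_mul _) ?_
        filter_upwards [hμ] with x hx
        rw [norm_smul, Real.norm_eq_abs, abs_sub_comm]
        exact mul_le_mul_of_nonneg_right (hp x hx).le (norm_nonneg _)
    _ = ε * (M / (M + 1)) := by rw [integral_const_mul]; ring
    _ ≤ 0 + ε := by
        rw [zero_add]
        exact mul_le_of_le_one_right hε.le ((div_le_one (by positivity)).mpr (by linarith))

theorem ae_eq_zero_of_forall_integral_pow_smul_eq_zero [CompleteSpace E]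
    (hμ : ∀ᵐ x ∂μ, x ∈ Icc a b) (hg : Integrable g μ) (h : ∀ n : ℕ, ∫ x, x ^ n • g x ∂μ = 0) :
    g =ᵐ[μ] 0 :=
  ae_eq_zero_of_integral_contDiff_smul_eq_zero hg.locallyIntegrable fun _ hφ _ =>
    integral_continuous_smul_eq_zero hμ hg h hφ.continuous

end MomentProblem

theorem abs_log_pow_le {δ : ℝ} (hδ : 0 < δ) (k : ℕ) {x : ℝ} (hx₀ : 0 < x) (hx₁ : x ≤ 1) :
    |Real.log x| ^ k ≤ k.factorial / δ ^ k * x ^ (-δ) := by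
  have hlog : |Real.log x| = -Real.log x := abs_of_nonpos (Real.log_nonpos hx₀.le hx₁)
  have hexp : Real.exp (δ * |Real.log x|) = x ^ (-δ) := by
    rw [Real.rpow_def_of_pos hx₀, hlog]
    ring_nf
  have hseries := Real.pow_div_factorial_le_exp _ (mul_nonneg hδ.le (abs_nonneg (Real.log x))) k
  rw [hexp, mul_pow, div_le_iff₀ (by positivity)] at hseries
  rw [div_mul_eq_mul_div, le_div_iff₀ (by positivity)]
  linarith

theorem memLp_rpow {r : ℝ} (hr : -(1 / 2) < r) : MemLp (fun x : ℝ => x ^ r) 2 μ01 := by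
  have hmeas : AEStronglyMeasurable (fun x : ℝ => x ^ r) μ01 :=
    (measurable_id.pow_const r).aestronglyMeasurable
  rw [memLp_two_iff_integrable_sq hmeas]
  have hIoc : IntegrableOn (fun x : ℝ => x ^ (2 * r)) (Ioc 0 1) :=
    (intervalIntegrable_iff_integrableOn_Ioc_of_le zero_le_one).mp
      (intervalIntegral.intervalIntegrable_rpow' (by linarith))
  refine (hIoc.mono_set Ioo_subset_Ioc_self).congr_fun_ae ?_
  filter_upwards [ae_restrict_mem measurableSet_Ioo] with x hx
  rw [mul_comm, Real.rpow_mul hx.1.le, Real.rpow_two]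

theorem memLp_rpow_mul_abs_log_pow {a : ℝ} (ha : -(1 / 2) < a) (k : ℕ) :
    MemLp (fun x : ℝ => x ^ a * |Real.log x| ^ k) 2 μ01 := by
  obtain ⟨δ, hδ, hδa⟩ : ∃ δ > 0, -(1 / 2) < a - δ := ⟨(a + 1 / 2) / 2, by linarith, by linarith⟩
  refine ((memLp_rpow hδa).const_mul (k.factorial / δ ^ k)).of_le (by fun_prop) ?_
  filter_upwards [ae_restrict_mem measurableSet_Ioo] with x ⟨hx₀, hx₁⟩
  rw [Real.norm_of_nonneg (by positivity), Real.norm_of_nonneg (by positivity),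
    sub_eq_add_neg, Real.rpow_add hx₀]
  calc x ^ a * |Real.log x| ^ k ≤ x ^ a * (k.factorial / δ ^ k * x ^ (-δ)) :=
        mul_le_mul_of_nonneg_left (abs_log_pow_le hδ k hx₀ hx₁.le) (by positivity)
    _ = _ := by ring

theorem integrable_rpow_mul_abs_log_pow_mul_norm {g : ℝ → ℂ} (hg : MemLp g 2 μ01) {a : ℝ}
    (ha : -(1 / 2) < a) (k : ℕ) :
    Integrable (fun x => x ^ a * |Real.log x| ^ k * ‖g x‖) μ01 :=
  (memLp_rpow_mul_abs_log_pow ha k).integrable_mul hg.norm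

section LogMellin

open Complex

variable {g : ℝ → ℂ}

noncomputable def logMellin (g : ℝ → ℂ) (k : ℕ) (s : ℂ) : ℂ :=
  ∫ x, (x : ℂ) ^ s * (Real.log x : ℂ) ^ k * g x ∂μ01

theorem aestronglyMeasurable_logMellin_integrand (hg : AEStronglyMeasurable g μ01) (k : ℕ)
    (s : ℂ) :
    AEStronglyMeasurable (fun x : ℝ => (x : ℂ) ^ s * (Real.log x : ℂ) ^ k * g x) μ01 := by
  have : Measurable fun x : ℝ => (x : ℂ) ^ s * (Real.log x : ℂ) ^ k := by fun_prop
  exact this.aestronglyMeasurable.mul hg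

theorem norm_logMellin_integrand (k : ℕ) (s : ℂ) {x : ℝ} (hx : 0 < x) :
    ‖(x : ℂ) ^ s * (Real.log x : ℂ) ^ k * g x‖ = x ^ s.re * |Real.log x| ^ k * ‖g x‖ := by
  rw [norm_mul, norm_mul, norm_cpow_eq_rpow_re_of_pos hx, norm_pow, norm_real, Real.norm_eq_abs]

theorem integrable_logMellin_integrand (hg : MemLp g 2 μ01) (k : ℕ) {s : ℂ}
    (hs : -(1 / 2) < s.re) :
    Integrable (fun x : ℝ => (x : ℂ) ^ s * (Real.log x : ℂ) ^ k * g x) μ01 := by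
  refine (integrable_rpow_mul_abs_log_pow_mul_norm hg hs k).mono'
    (aestronglyMeasurable_logMellin_integrand hg.1 k s) ?_
  filter_upwards [ae_restrict_mem measurableSet_Ioo] with x hx
  exact (norm_logMellin_integrand k s hx.1).le

theorem hasDerivAt_logMellin (hg : MemLp g 2 μ01) (k : ℕ) {s₀ : ℂ} (hs₀ : -(1 / 2) < s₀.re) :
    HasDerivAt (logMellin g k) (logMellin g (k + 1) s₀) s₀ := by
  obtain ⟨ε, hε, hεs₀⟩ : ∃ ε > 0, -(1 / 2) < s₀.re - ε :=
    ⟨(s₀.re + 1 / 2) / 2, by linarith, by linarith⟩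
  have hre {s : ℂ} (hs : s ∈ Metric.ball s₀ ε) : s₀.re - ε ≤ s.re := by
    have := (abs_le.mp ((abs_re_le_norm (s - s₀)).trans (mem_ball_iff_norm.mp hs).le)).1
    rw [sub_re] at this
    linarith
  refine (hasDerivAt_integral_of_dominated_loc_of_deriv_le (Metric.ball_mem_nhds s₀ hε)
    (F' := fun s x => (x : ℂ) ^ s * (Real.log x : ℂ) ^ (k + 1) * g x)
    (.of_forall fun s => aestronglyMeasurable_logMellin_integrand hg.1 k s)
    (integrable_logMellin_integrand hg k hs₀)
    (aestronglyMeasurable_logMellin_integrand hg.1 (k + 1) s₀) ?_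
    (integrable_rpow_mul_abs_log_pow_mul_norm hg hεs₀ (k + 1)) ?_).2
  · filter_upwards [ae_restrict_mem measurableSet_Ioo] with x ⟨hx₀, hx₁⟩ s hs
    rw [norm_logMellin_integrand (k + 1) s hx₀]
    have hpow := Real.rpow_le_rpow_of_exponent_ge hx₀ hx₁.le (hre hs)
    gcongr
  · filter_upwards [ae_restrict_mem measurableSet_Ioo] with x ⟨hx₀, _⟩ s _
    have h := (((hasDerivAt_id s).const_cpow (c := (x : ℂ))
      (.inl (ofReal_ne_zero.mpr hx₀.ne'))).mul_const ((Real.log x : ℂ) ^ k)).mul_const (g x)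
    simp only [id, mul_one, ← ofReal_log hx₀.le] at h
    exact h.congr_deriv (by ring)

theorem iteratedDeriv_logMellin (hg : MemLp g 2 μ01) (n : ℕ) {s : ℂ} (hs : -(1 / 2) < s.re) :
    iteratedDeriv n (logMellin g 0) s = logMellin g n s := by
  induction n generalizing s with
  | zero => rfl
  | succ n ih =>
    have hnhds : iteratedDeriv n (logMellin g 0) =ᶠ[𝓝 s] logMellin g n :=
      eventually_of_mem ((isOpen_lt continuous_const continuous_re).mem_nhds hs) fun t ht => ih ht
    rw [iteratedDeriv_succ, hnhds.deriv_eq, (hasDerivAt_logMellin hg n hs).deriv]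

theorem logMellin_zero_eqOn_zero (hg : MemLp g 2 μ01) (h : ∀ n, logMellin g n 0 = 0) :
    EqOn (logMellin g 0) 0 {s : ℂ | -(1 / 2) < s.re} := by
  have hF : AnalyticOnNhd ℂ (logMellin g 0) {s : ℂ | -(1 / 2) < s.re} :=
    DifferentiableOn.analyticOnNhd
      (fun s hs => (hasDerivAt_logMellin hg 0 hs).differentiableAt.differentiableWithinAt)
      (isOpen_lt continuous_const continuous_re)
  have h0 : (0 : ℂ) ∈ {s : ℂ | -(1 / 2) < s.re} := by norm_num
  have hzero : ∀ᶠ s in 𝓝 0, logMellin g 0 s = 0 := by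
    rw [← analyticOrderAt_eq_top, ENat.eq_top_iff_forall_ge]
    exact fun n => (natCast_le_analyticOrderAt_iff_iteratedDeriv_eq_zero (hF 0 h0)).2
      fun i _ => (iteratedDeriv_logMellin hg i h0).trans (h i)
  exact hF.eqOn_zero_of_preconnected_of_eventuallyEq_zero
    (convex_halfSpace_re_gt _).isPreconnected h0 hzero

end LogMellin

theorem memLp_log_pow (n : ℕ) : MemLp (fun x : ℝ => (Real.log x : ℂ) ^ n) 2 μ01 := by
  refine (memLp_rpow_mul_abs_log_pow (a := 0) (by norm_num) n).of_le (by fun_prop)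
    (.of_forall fun x => ?_)
  simp

theorem inner_eq_logMellin {f g : Lp ℂ 2 μ01} {n : ℕ}
    (hf : f =ᵐ[μ01] fun x => (Real.log x : ℂ) ^ n) :
    inner ℂ f g = logMellin g n 0 := by
  rw [L2.inner_def, logMellin]
  refine integral_congr_ae ?_
  filter_upwards [hf] with x hx
  simp [hx, mul_comm]

theorem logMellin_zero_natCast (g : ℝ → ℂ) (n : ℕ) :
    logMellin g 0 n = ∫ x, x ^ n • g x ∂μ01 := by
  simp [logMellin, Complex.real_smul]

end LogPowCompleteness

open LogPowCompleteness

/-- The system `{(ln x)^n : n ∈ ℕ}` is complete in `L²(0,1)`. -/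
theorem stmt_0 :
    (Submodule.span ℂ {f : Lp ℂ 2 (volume.restrict (Set.Ioo (0:ℝ) 1)) |
        ∃ n : ℕ, ∀ᵐ x ∂(volume.restrict (Set.Ioo (0:ℝ) 1)),
          f x = (Real.log x : ℂ) ^ n}).topologicalClosure = ⊤ := by
  rw [Submodule.topologicalClosure_eq_top_iff, Submodule.eq_bot_iff]
  intro g hg
  have hlog (n : ℕ) : logMellin g n 0 = 0 := by
    rw [← inner_eq_logMellin (memLp_log_pow n).coeFn_toLp]
    exact (Submodule.mem_orthogonal _ g).mp hg _
      (Submodule.subset_span ⟨n, (memLp_log_pow n).coeFn_toLp⟩)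
  have hmoment (n : ℕ) : ∫ x, x ^ n • g x ∂μ01 = 0 := by
    rw [← logMellin_zero_natCast]
    exact logMellin_zero_eqOn_zero (Lp.memLp g) hlog
      (show -(1 / 2) < (n : ℂ).re by rw [Complex.natCast_re]; linarith [n.cast_nonneg (α := ℝ)])
  exact Lp.eq_zero_iff_ae_eq_zero.mpr (ae_eq_zero_of_forall_integral_pow_smul_eq_zero
    ((ae_restrict_mem measurableSet_Ioo).mono fun _ hx => Ioo_subset_Icc_self hx)
    ((Lp.memLp g).integrable one_le_two) hmoment)
end

section
/- For |q| < 1, the function F_q(z) = ∏_{k=1}^∞ (1 - q^k z) defines an entire function of z, and F_q(z) = 1 + ∑_{k=1}^∞ q^{k(k+1)/2} / ((q-1)(q²-1)⋯(q^k-1)) · z^k for all z ∈ ℂ. -/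
/-!
The power series `G(z) = ∑ cₙ zⁿ` with `cₙ = q^(n(n+1)/2) / ((q-1)⋯(qⁿ-1))` has infinite radius
of convergence, since `c_{n+1} / cₙ = q^(n+1) / (q^(n+1) - 1) → 0`, and this recursion for the
coefficients is exactly the functional equation `G(z) = (1 - qz) G(qz)`. Iterating it,
`G(z) = ∏_{k<n} (1 - q^(k+1) z) · G(qⁿ z)`, and since `G` is continuous with `G(0) = 1`, letting
`n → ∞` identifies `G` with the infinite product.
-/

open Filter Topology Finset

section Coefficients

variable {K : Type*} [Field K]

noncomputable def eulerCoeff (q : K) (n : ℕ) : K :=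
  q ^ (n * (n + 1) / 2) / ∏ i ∈ range n, (q ^ (i + 1) - 1)

@[simp]
lemma eulerCoeff_zero (q : K) : eulerCoeff q 0 = 1 := by
  simp [eulerCoeff]

lemma succ_mul_succ_add_one_div_two (n : ℕ) :
    (n + 1) * (n + 1 + 1) / 2 = n * (n + 1) / 2 + (n + 1) := by
  rw [show (n + 1) * (n + 1 + 1) = n * (n + 1) + 2 * (n + 1) by ring,
    Nat.add_mul_div_left _ _ two_pos]

lemma eulerCoeff_succ (q : K) (n : ℕ) :
    eulerCoeff q (n + 1) = eulerCoeff q n * q ^ (n + 1) / (q ^ (n + 1) - 1) := by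
  rw [eulerCoeff, eulerCoeff, succ_mul_succ_add_one_div_two, pow_add, prod_range_succ,
    div_mul_eq_mul_div, div_div]

lemma eulerCoeff_succ_mul_sub_one {q : K} {n : ℕ} (h : q ^ (n + 1) - 1 ≠ 0) :
    eulerCoeff q (n + 1) * (q ^ (n + 1) - 1) = eulerCoeff q n * q ^ (n + 1) := by
  rw [eulerCoeff_succ, div_mul_cancel₀ _ h]

end Coefficients

lemma one_sub_norm_le_norm_pow_succ_sub_one {R : Type*} [SeminormedRing R] [NormOneClass R]
    {x : R} (hx : ‖x‖ ≤ 1) (n : ℕ) : 1 - ‖x‖ ≤ ‖x ^ (n + 1) - 1‖ :=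
  calc 1 - ‖x‖ ≤ 1 - ‖x‖ ^ (n + 1) := by
        gcongr; exact pow_le_of_le_one (norm_nonneg x) hx n.succ_ne_zero
    _ ≤ 1 - ‖x ^ (n + 1)‖ := by gcongr; exact norm_pow_le' x n.succ_pos
    _ ≤ ‖x ^ (n + 1) - 1‖ := by
        rw [norm_sub_rev, ← norm_one (α := R)]; exact norm_sub_norm_le _ _

section Series

variable {q : ℂ}

lemma pow_succ_sub_one_ne_zero (hq : ‖q‖ < 1) (n : ℕ) : q ^ (n + 1) - 1 ≠ 0 :=
  norm_pos_iff.mp <| (sub_pos.mpr hq).trans_le (one_sub_norm_le_norm_pow_succ_sub_one hq.le n)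

lemma norm_eulerCoeff_succ_le (hq : ‖q‖ < 1) (n : ℕ) :
    ‖eulerCoeff q (n + 1)‖ ≤ ‖q‖ ^ (n + 1) / (1 - ‖q‖) * ‖eulerCoeff q n‖ := by
  rw [eulerCoeff_succ, norm_div, norm_mul, norm_pow, mul_comm, mul_div_right_comm]
  gcongr
  exact one_sub_norm_le_norm_pow_succ_sub_one hq.le n

lemma summable_norm_eulerCoeff_mul_pow (hq : ‖q‖ < 1) {r : ℝ} (hr : 0 ≤ r) :
    Summable fun n => ‖eulerCoeff q n‖ * r ^ n := by
  refine summable_of_ratio_norm_eventually_le one_half_lt_one ?_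
  have hratio : Tendsto (fun n : ℕ => ‖q‖ ^ (n + 1) * r / (1 - ‖q‖)) atTop (𝓝 0) := by
    simpa using (((tendsto_pow_atTop_nhds_zero_of_lt_one (norm_nonneg q) hq).comp
      (tendsto_add_atTop_nat 1)).mul_const r).div_const (1 - ‖q‖)
  filter_upwards [hratio.eventually_le_const one_half_pos] with n hn
  rw [Real.norm_of_nonneg (by positivity), Real.norm_of_nonneg (by positivity)]
  calc ‖eulerCoeff q (n + 1)‖ * r ^ (n + 1)
      ≤ ‖q‖ ^ (n + 1) / (1 - ‖q‖) * ‖eulerCoeff q n‖ * r ^ (n + 1) := by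
        gcongr; exact norm_eulerCoeff_succ_le hq n
    _ = ‖q‖ ^ (n + 1) * r / (1 - ‖q‖) * (‖eulerCoeff q n‖ * r ^ n) := by ring
    _ ≤ 1 / 2 * (‖eulerCoeff q n‖ * r ^ n) := by gcongr

lemma summable_eulerCoeff_mul_pow (hq : ‖q‖ < 1) (z : ℂ) :
    Summable fun n => eulerCoeff q n * z ^ n :=
  .of_norm <| by
    simpa only [norm_mul, norm_pow] using summable_norm_eulerCoeff_mul_pow hq (norm_nonneg z)

noncomputable def eulerSeries (q z : ℂ) : ℂ :=
  ∑' n, eulerCoeff q n * z ^ n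

@[simp]
lemma eulerSeries_zero (q : ℂ) : eulerSeries q 0 = 1 := by
  rw [eulerSeries, tsum_eq_single 0 fun n hn => by simp [zero_pow hn]]
  simp

lemma differentiable_eulerSeries (hq : ‖q‖ < 1) : Differentiable ℂ (eulerSeries q) := by
  intro z
  set R := ‖z‖ + 1
  have hz : z ∈ Metric.ball (0 : ℂ) R := by simp [R]
  refine (Complex.differentiableOn_tsum_of_summable_norm
    (summable_norm_eulerCoeff_mul_pow hq (by positivity : 0 ≤ R))
    (fun n => ((differentiable_pow n).const_mul _).differentiableOn) Metric.isOpen_ball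
    fun n w hw => ?_).differentiableAt (Metric.isOpen_ball.mem_nhds hz)
  rw [norm_mul, norm_pow]
  gcongr
  exact (mem_ball_zero_iff.mp hw).le

lemma eulerSeries_eq_one_sub_mul (hq : ‖q‖ < 1) (z : ℂ) :
    eulerSeries q z = (1 - q * z) * eulerSeries q (q * z) := by
  have hz := summable_eulerCoeff_mul_pow hq z
  have hqz := summable_eulerCoeff_mul_pow hq (q * z)
  have hterm (n : ℕ) :
      eulerCoeff q (n + 1) * z ^ (n + 1) - eulerCoeff q (n + 1) * (q * z) ^ (n + 1) =
        -(q * z) * (eulerCoeff q n * (q * z) ^ n) := by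
    linear_combination (-z ^ (n + 1)) *
      eulerCoeff_succ_mul_sub_one (pow_succ_sub_one_ne_zero hq n)
  have hdiff : eulerSeries q z - eulerSeries q (q * z) = -(q * z) * eulerSeries q (q * z) := by
    rw [eulerSeries, eulerSeries, ← hz.tsum_sub hqz, (hz.sub hqz).tsum_eq_zero_add]
    simp only [pow_zero, sub_self, zero_add, hterm, tsum_mul_left]
  linear_combination hdiff

lemma eulerSeries_eq_prod_mul (hq : ‖q‖ < 1) (z : ℂ) (n : ℕ) :
    eulerSeries q z = (∏ i ∈ range n, (1 - q ^ (i + 1) * z)) * eulerSeries q (q ^ n * z) := by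
  induction n with
  | zero => simp
  | succ n ih =>
    rw [ih, eulerSeries_eq_one_sub_mul hq (q ^ n * z), prod_range_succ, ← mul_assoc, pow_succ',
      mul_assoc q]

lemma multipliable_one_sub_pow_succ_mul (hq : ‖q‖ < 1) (z : ℂ) :
    Multipliable fun k : ℕ => 1 - q ^ (k + 1) * z := by
  have hgeom : Summable fun k : ℕ => q ^ (k + 1) :=
    (summable_nat_add_iff 1).mpr (summable_geometric_of_norm_lt_one hq)
  simpa only [← sub_eq_add_neg] using
    Complex.multipliable_one_add_of_summable (hgeom.mul_right z).neg

lemma tprod_one_sub_pow_succ_mul (hq : ‖q‖ < 1) (z : ℂ) :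
    ∏' k : ℕ, (1 - q ^ (k + 1) * z) = eulerSeries q z := by
  have hpartial := (multipliable_one_sub_pow_succ_mul hq z).hasProd.tendsto_prod_nat
  have htail : Tendsto (fun n : ℕ => eulerSeries q (q ^ n * z)) atTop (𝓝 1) := by
    rw [← eulerSeries_zero q]
    refine ((differentiable_eulerSeries hq).continuous.tendsto 0).comp ?_
    simpa using (tendsto_pow_atTop_nhds_zero_of_norm_lt_one hq).mul_const z
  have hlim := hpartial.mul htail
  rw [mul_one] at hlim
  exact tendsto_nhds_unique hlim
    (tendsto_const_nhds.congr fun n => eulerSeries_eq_prod_mul hq z n)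

end Series

/-- For `|q| < 1`, `F_q(z) = ∏_{k≥1} (1 - qᵏ z)` is entire and
`F_q(z) = 1 + ∑_{k≥1} q^{k(k+1)/2}/((q-1)⋯(qᵏ-1)) zᵏ`. -/
theorem stmt_5 (q : ℂ) (hq : ‖q‖ < 1) :
    Differentiable ℂ (fun z : ℂ => ∏' k : ℕ, (1 - q ^ (k + 1) * z)) ∧
    ∀ z : ℂ, (∏' k : ℕ, (1 - q ^ (k + 1) * z)) =
      1 + ∑' k : ℕ, q ^ ((k + 1) * (k + 2) / 2) /
        (∏ i ∈ Finset.range (k + 1), (q ^ (i + 1) - 1)) * z ^ (k + 1) := by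
  have hprod : (fun z : ℂ => ∏' k : ℕ, (1 - q ^ (k + 1) * z)) = eulerSeries q :=
    funext (tprod_one_sub_pow_succ_mul hq)
  refine ⟨hprod ▸ differentiable_eulerSeries hq, fun z => ?_⟩
  rw [congrFun hprod z, eulerSeries, (summable_eulerCoeff_mul_pow hq z).tsum_eq_zero_add]
  simp [eulerCoeff]
end

section
/- For 0 < q < 1 and n ≥ 1, the polynomial P_n(z) = 1 + ∑_{k=1}^n (n!/(n-k)!) · q^{k(k+1)/2}/((q-1)⋯(q^k-1)) · z^k has only real positive zeroes. -/
/-!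
Let `D` be differentiation. Since `∏_{j ≥ 1} (1 - qʲ t) = ∑_k (-1)ᵏ eₖ t^k` with
`eₖ = e_k(q, q², …) = q^{k(k+1)/2} / ((1-q)⋯(1-qᵏ))`, the reversed polynomial `zⁿ P_n(1/z)` is
`∑_k (-1)ᵏ n!/(n-k)! eₖ zⁿ⁻ᵏ`, the limit of `H_m = (1 - q D)⋯(1 - qᵐ D) Xⁿ` as `m → ∞`.
Each factor `1 - c D` preserves real-rootedness (Laguerre), and a monic real-rooted polynomial
of degree `n` satisfies `|p(w)| ≥ |Im w|ⁿ`, a bound that survives the limit. So all zeros of `P_n`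
are real, and they are positive because the coefficients of `P_n` alternate in sign.
-/

open Polynomial Filter Topology

namespace Polynomial

variable {R : Type*} [Ring R] {p : R[X]}

lemma degree_C_mul_derivative_lt (hp : p ≠ 0) (c : R) : (C c * derivative p).degree < p.degree := by
  rw [← smul_eq_C_mul]
  exact (degree_smul_le c _).trans_lt (degree_derivative_lt hp)

lemma Monic.sub_C_mul_derivative [Nontrivial R] (hp : p.Monic) (c : R) :
    (p - C c * derivative p).Monic :=
  hp.sub_of_left (degree_C_mul_derivative_lt hp.ne_zero c)

lemma Monic.natDegree_sub_C_mul_derivative [Nontrivial R] (hp : p.Monic) (c : R) :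
    (p - C c * derivative p).natDegree = p.natDegree :=
  natDegree_eq_of_degree_eq
    (degree_sub_eq_left_of_degree_lt (degree_C_mul_derivative_lt hp.ne_zero c))

end Polynomial

lemma pos_of_sum_mul_pow_eq_zero {a : ℕ → ℝ} {N : ℕ} (h0 : 0 < a 0)
    (halt : ∀ k, 0 ≤ (-1) ^ k * a k) {x : ℝ} (hx : ∑ k ∈ Finset.range (N + 1), a k * x ^ k = 0) :
    0 < x := by
  by_contra! hx0
  refine (Finset.sum_pos' (fun k _ => ?_) ⟨0, by simp, by simpa⟩).ne' hx
  rw [show a k * x ^ k = (-1) ^ k * a k * (-x) ^ k by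
    rw [neg_pow x, mul_mul_mul_comm, ← mul_pow]; norm_num]
  exact mul_nonneg (halt k) (pow_nonneg (neg_nonneg.mpr hx0) k)

lemma prod_Icc_pow_sub_one {R : Type*} [CommRing R] (q : R) (k : ℕ) :
    ∏ i ∈ Finset.Icc 1 k, (q ^ i - 1) = (-1) ^ k * ∏ i ∈ Finset.Icc 1 k, (1 - q ^ i) := by
  simpa using Finset.prod_neg (s := Finset.Icc 1 k) fun i => 1 - q ^ i

lemma prod_Icc_one_sub_pow_pos {q : ℝ} (hq0 : 0 ≤ q) (hq1 : q < 1) (k : ℕ) :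
    0 < ∏ i ∈ Finset.Icc 1 k, (1 - q ^ i) :=
  Finset.prod_pos fun _ hi =>
    sub_pos.mpr (pow_lt_one₀ hq0 hq1 (Nat.one_le_iff_ne_zero.mp (Finset.mem_Icc.mp hi).1))

def RealRooted (p : ℂ[X]) : Prop := ∀ z : ℂ, p.IsRoot z → z.im = 0

namespace RealRooted

variable {p : ℂ[X]}

lemma im_eq_zero_of_mem_roots (hp : RealRooted p) {r : ℂ} (hr : r ∈ p.roots) : r.im = 0 :=
  hp r (isRoot_of_mem_roots hr)

/-- At a non-real zero `z` we would get `c ∑_r 1 / (z - r) = 1`, but every `1 / (z - r)` has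
imaginary part of sign opposite to that of `z`. -/
lemma sub_C_mul_derivative (hp : RealRooted p) (c : ℝ) :
    RealRooted (p - C (c : ℂ) * derivative p) := by
  intro z hz
  by_contra him
  have hpz : p.eval z ≠ 0 := fun h => him (hp z h)
  set S := (p.roots.map fun r => 1 / (z - r)).sum with hS
  have hcS : (c : ℂ) * S = 1 := by
    have hz' : p.eval z * (1 - c * S) = 0 := by
      rw [← hz.eq_zero, eval_sub, eval_mul, eval_C,
        (IsAlgClosed.splits p).eval_derivative_eq_eval_mul_sum hpz]
      ring
    linear_combination -(mul_eq_zero.mp hz').resolve_left hpz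
  have hS_im : S.im = 0 := by
    have h := congrArg Complex.im hcS
    simp only [Complex.im_ofReal_mul, Complex.one_im] at h
    exact (mul_eq_zero.mp h).resolve_left (by rintro rfl; simp at hcS)
  have hroots : p.roots ≠ 0 := by
    rintro h
    simp [hS, h] at hcS
  have hneg : z.im * S.im < 0 := by
    have hterm : ∀ r ∈ p.roots, z.im * (1 / (z - r)).im < 0 := fun r hr => by
      have hr' := hp.im_eq_zero_of_mem_roots hr
      rw [one_div, Complex.inv_im, Complex.sub_im, hr', sub_zero, mul_div_assoc', mul_neg,
        neg_div, neg_lt_zero]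
      exact div_pos (mul_self_pos.mpr him) (Complex.normSq_pos.mpr (sub_ne_zero.mpr
        fun h => him (h ▸ hr')))
    calc z.im * S.im = (p.roots.map fun r => z.im * (1 / (z - r)).im).sum := by
          rw [Multiset.sum_map_mul_left, hS, show Complex.im _ = _ from
            map_multiset_sum Complex.imAddGroupHom _, Multiset.map_map]
          rfl
      _ < (p.roots.map fun _ => (0 : ℝ)).sum := Multiset.sum_lt_sum_of_nonempty hroots hterm
      _ = 0 := by simp
  simp [hS_im] at hneg

lemma pow_abs_im_le_norm_eval (hp : RealRooted p) (hm : p.Monic) (w : ℂ) :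
    |w.im| ^ p.natDegree ≤ ‖p.eval w‖ := by
  have hsplit := IsAlgClosed.splits p
  rw [hsplit.eval_eq_prod_roots_of_monic hm, hsplit.natDegree_eq_card_roots,
    ← Multiset.prod_replicate, ← Multiset.map_const',
    show ‖_‖ = _ from map_multiset_prod (normHom : ℂ →*₀ ℝ) _, Multiset.map_map]
  refine Multiset.prod_map_le_prod_map₀ _ _ (fun _ _ => abs_nonneg _) fun r hr => ?_
  simpa [hp.im_eq_zero_of_mem_roots hr] using Complex.abs_im_le_norm (w - r)

end RealRooted

lemma im_eq_zero_of_tendsto_eval_zero {p : ℕ → ℂ[X]} {n : ℕ} (hp : ∀ m, RealRooted (p m))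
    (hm : ∀ m, (p m).Monic) (hdeg : ∀ m, (p m).natDegree = n) {w : ℂ}
    (hw : Tendsto (fun m => (p m).eval w) atTop (𝓝 0)) : w.im = 0 := by
  have hle : |w.im| ^ n ≤ ‖(0 : ℂ)‖ := ge_of_tendsto' hw.norm fun m => by
    simpa only [hdeg m] using (hp m).pow_abs_im_le_norm_eval (hm m) w
  rw [norm_zero] at hle
  exact abs_eq_zero.mp (eq_zero_of_pow_eq_zero (le_antisymm hle (by positivity)))

/-- `geomEsymm q m k` is the elementary symmetric polynomial `e_k(q, q², …, q^m)`. -/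
noncomputable def geomEsymm (q : ℝ) : ℕ → ℕ → ℝ
  | _, 0 => 1
  | 0, _ + 1 => 0
  | m + 1, k + 1 => geomEsymm q m (k + 1) + q ^ (m + 1) * geomEsymm q m k

namespace geomEsymm

variable {q : ℝ}

@[simp] lemma zero_right (m : ℕ) : geomEsymm q m 0 = 1 := by cases m <;> rfl

@[simp] lemma zero_succ (k : ℕ) : geomEsymm q 0 (k + 1) = 0 := rfl

lemma succ_succ (m k : ℕ) :
    geomEsymm q (m + 1) (k + 1) = geomEsymm q m (k + 1) + q ^ (m + 1) * geomEsymm q m k := rfl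

lemma nonneg (hq : 0 ≤ q) (m k : ℕ) : 0 ≤ geomEsymm q m k := by
  induction m generalizing k with
  | zero => cases k <;> simp
  | succ m ih =>
    cases k with
    | zero => simp
    | succ k => rw [succ_succ]; exact add_nonneg (ih _) (mul_nonneg (by positivity) (ih _))

lemma monotone (hq : 0 ≤ q) (k : ℕ) : Monotone (geomEsymm q · k) := by
  refine monotone_nat_of_le_succ fun m => ?_
  cases k with
  | zero => simp
  | succ k =>
    rw [succ_succ]
    exact le_add_of_nonneg_right (mul_nonneg (by positivity) (nonneg hq m k))

lemma eq_sum_range (m k : ℕ) :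
    geomEsymm q m (k + 1) = ∑ j ∈ Finset.range m, q ^ (j + 1) * geomEsymm q j k := by
  induction m with
  | zero => simp
  | succ m ih => rw [Finset.sum_range_succ, ← ih, succ_succ]

lemma le_div_one_sub_pow (hq0 : 0 ≤ q) (hq1 : q < 1) (m k : ℕ) :
    geomEsymm q m k ≤ (q / (1 - q)) ^ k := by
  induction k generalizing m with
  | zero => simp
  | succ k ih =>
    have hgeom : ∑ j ∈ Finset.range m, q ^ (j + 1) ≤ q / (1 - q) := by
      simpa [Finset.sum_Ico_eq_sum_range, add_comm 1] using
        geom_sum_Ico_le_of_lt_one (m := 1) (n := m + 1) hq0 hq1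
    calc geomEsymm q m (k + 1) ≤ ∑ j ∈ Finset.range m, q ^ (j + 1) * (q / (1 - q)) ^ k := by
          rw [eq_sum_range]
          exact Finset.sum_le_sum fun j _ => mul_le_mul_of_nonneg_left (ih j) (by positivity)
      _ ≤ q / (1 - q) * (q / (1 - q)) ^ k := by
          rw [← Finset.sum_mul]
          exact mul_le_mul_of_nonneg_right hgeom (by positivity)
      _ = (q / (1 - q)) ^ (k + 1) := (pow_succ' _ _).symm

/-- The `q`-shift `e_{k+1}(q, …, q^{m+1}) = q^{k+1} e_{k+1}(1, q, …, q^m)`. -/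
lemma succ_succ_eq_pow_mul (m k : ℕ) :
    geomEsymm q (m + 1) (k + 1) = q ^ (k + 1) * (geomEsymm q m (k + 1) + geomEsymm q m k) := by
  induction m generalizing k with
  | zero => cases k <;> simp [succ_succ]
  | succ m ih =>
    cases k with
    | zero =>
      conv_rhs => rw [succ_succ]
      rw [succ_succ, ih]
      simp only [zero_right]
      ring
    | succ k =>
      conv_rhs => rw [succ_succ, succ_succ]
      rw [succ_succ, ih, ih]
      ring

lemma tendsto (hq0 : 0 ≤ q) (hq1 : q < 1) (k : ℕ) :
    Tendsto (geomEsymm q · k) atTop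
      (𝓝 (q ^ (k * (k + 1) / 2) / ∏ i ∈ Finset.Icc 1 k, (1 - q ^ i))) := by
  induction k with
  | zero => simp
  | succ k ih =>
    have hconv := tendsto_atTop_ciSup (monotone hq0 (k + 1))
      ⟨_, Set.forall_mem_range.mpr (le_div_one_sub_pow hq0 hq1 · (k + 1))⟩
    set L := ⨆ m, geomEsymm q m (k + 1)
    have hfixed :
        L = q ^ (k + 1) * (L + q ^ (k * (k + 1) / 2) / ∏ i ∈ Finset.Icc 1 k, (1 - q ^ i)) :=
      tendsto_nhds_unique (hconv.comp (tendsto_add_atTop_nat 1)) <| by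
        simpa only [Function.comp_def, succ_succ_eq_pow_mul] using
          (hconv.add ih).const_mul (q ^ (k + 1))
    have hprod := (prod_Icc_one_sub_pow_pos hq0 hq1 k).ne'
    have hexp : (k + 1) * (k + 1 + 1) / 2 = k * (k + 1) / 2 + (k + 1) := by
      rw [show (k + 1) * (k + 1 + 1) = k * (k + 1) + 2 * (k + 1) by ring,
        Nat.add_mul_div_left _ _ two_pos]
    convert hconv using 2
    rw [div_eq_iff (prod_Icc_one_sub_pow_pos hq0 hq1 (k + 1)).ne',
      Finset.prod_Icc_succ_top (by omega), hexp, pow_add]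
    linear_combination (-∏ i ∈ Finset.Icc 1 k, (1 - q ^ i)) * hfixed -
      q ^ (k + 1) * div_mul_cancel₀ (q ^ (k * (k + 1) / 2)) hprod

end geomEsymm

/-- `qDiffPoly q n m = (1 - q D)(1 - q² D)⋯(1 - qᵐ D) Xⁿ`, where `D` is differentiation. -/
noncomputable def qDiffPoly (q : ℝ) (n : ℕ) : ℕ → ℂ[X]
  | 0 => X ^ n
  | m + 1 => qDiffPoly q n m - C ((q ^ (m + 1) : ℝ) : ℂ) * derivative (qDiffPoly q n m)

namespace qDiffPoly

variable (q : ℝ) (n : ℕ)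

lemma realRooted (m : ℕ) : RealRooted (qDiffPoly q n m) := by
  induction m with
  | zero =>
    intro z hz
    have hz0 : z ^ n = 0 := by simpa [qDiffPoly] using hz
    simp [eq_zero_of_pow_eq_zero hz0]
  | succ m ih => exact ih.sub_C_mul_derivative _

lemma monic (m : ℕ) : (qDiffPoly q n m).Monic := by
  induction m with
  | zero => exact monic_X_pow n
  | succ m ih => exact ih.sub_C_mul_derivative _

lemma natDegree (m : ℕ) : (qDiffPoly q n m).natDegree = n := by
  induction m with
  | zero => exact natDegree_X_pow n
  | succ m ih => exact ((monic q n m).natDegree_sub_C_mul_derivative _).trans ih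

lemma eq_sum (m : ℕ) : qDiffPoly q n m =
    ∑ k ∈ Finset.range (n + 1),
      C (((-1) ^ k * geomEsymm q m k : ℝ) : ℂ) * derivative^[k] (X ^ n) := by
  induction m with
  | zero =>
    rw [Finset.sum_range_succ', Finset.sum_eq_zero fun k _ => by simp]
    simp [qDiffPoly]
  | succ m ih =>
    have hD : derivative^[n + 1] (X ^ n : ℂ[X]) = 0 :=
      iterate_derivative_eq_zero (by simp)
    rw [qDiffPoly, ih, derivative_sum, Finset.mul_sum]
    simp only [derivative_C_mul, ← Function.iterate_succ_apply' derivative]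
    rw [Finset.sum_range_succ' _ n, Finset.sum_range_succ' (fun k => C _ * derivative^[k] _) n,
      Finset.sum_range_succ (fun k => C _ * (C _ * derivative^[k + 1] _)) n, hD, mul_zero,
      mul_zero, add_zero, add_sub_right_comm, ← Finset.sum_sub_distrib,
      geomEsymm.zero_right, geomEsymm.zero_right]
    congr 1
    refine Finset.sum_congr rfl fun k _ => ?_
    rw [geomEsymm.succ_succ, ← mul_assoc, ← C_mul, ← sub_mul, ← C_sub]
    congr 2
    push_cast
    ring

lemma eval_eq_sum (m : ℕ) (w : ℂ) : (qDiffPoly q n m).eval w = ∑ k ∈ Finset.range (n + 1),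
    (((-1) ^ k * n.descFactorial k * geomEsymm q m k : ℝ) : ℂ) * w ^ (n - k) := by
  rw [eq_sum, eval_finsetSum]
  refine Finset.sum_congr rfl fun k _ => ?_
  rw [iterate_derivative_X_pow_eq_C_mul, eval_mul, eval_C, eval_mul, eval_C, eval_pow, eval_X]
  push_cast
  ring

end qDiffPoly

noncomputable def qCoeff (q : ℝ) (n k : ℕ) : ℝ :=
  n.descFactorial k * (q ^ (k * (k + 1) / 2) / ∏ i ∈ Finset.Icc 1 k, (q ^ i - 1))

noncomputable def qPoly (q : ℝ) (n : ℕ) : ℂ[X] :=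
  ∑ k ∈ Finset.range (n + 1), C (qCoeff q n k : ℂ) * X ^ k

section qPoly

variable (q : ℝ) (n : ℕ)

@[simp] lemma qCoeff_zero : qCoeff q n 0 = 1 := by simp [qCoeff]

lemma qCoeff_eq_neg_one_pow_mul (k : ℕ) : qCoeff q n k =
    (-1) ^ k * n.descFactorial k * (q ^ (k * (k + 1) / 2) / ∏ i ∈ Finset.Icc 1 k, (1 - q ^ i)) := by
  rw [qCoeff, prod_Icc_pow_sub_one, mul_comm ((-1 : ℝ) ^ k), ← div_div,
    div_eq_mul_inv _ ((-1 : ℝ) ^ k), ← inv_pow, inv_neg_one]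
  ring

lemma neg_one_pow_mul_qCoeff_nonneg (hq0 : 0 ≤ q) (hq1 : q < 1) (k : ℕ) :
    0 ≤ (-1) ^ k * qCoeff q n k := by
  rw [qCoeff_eq_neg_one_pow_mul, ← mul_assoc, ← mul_assoc, ← pow_add, ← two_mul, pow_mul,
    neg_one_sq, one_pow, one_mul]
  have := prod_Icc_one_sub_pow_pos hq0 hq1 k
  positivity

lemma qPoly_eq : qPoly q n = C 1 + ∑ k ∈ Finset.Icc 1 n,
    C (((n.factorial / (n - k).factorial : ℕ) : ℂ) *
      (q : ℂ) ^ (k * (k + 1) / 2) / ∏ i ∈ Finset.Icc 1 k, ((q : ℂ) ^ i - 1)) * X ^ k := by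
  rw [qPoly, Finset.range_eq_Ico, Finset.sum_eq_sum_Ico_succ_bot (Nat.zero_lt_succ n), zero_add,
    Nat.succ_eq_add_one, Finset.Ico_add_one_right_eq_Icc]
  congr 1
  · simp
  refine Finset.sum_congr rfl fun k hk => ?_
  rw [qCoeff, Nat.descFactorial_eq_div (Finset.mem_Icc.mp hk).2]
  push_cast
  rw [mul_div_assoc]

lemma eval_qPoly (z : ℂ) :
    (qPoly q n).eval z = ∑ k ∈ Finset.range (n + 1), (qCoeff q n k : ℂ) * z ^ k := by
  simp [qPoly, eval_finsetSum]

lemma qDiffPoly.tendsto_eval_inv (hq0 : 0 ≤ q) (hq1 : q < 1) {z : ℂ} (hz : z ≠ 0) :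
    Tendsto (fun m => (qDiffPoly q n m).eval z⁻¹) atTop (𝓝 (z⁻¹ ^ n * (qPoly q n).eval z)) := by
  have hlim : z⁻¹ ^ n * (qPoly q n).eval z =
      ∑ k ∈ Finset.range (n + 1), (qCoeff q n k : ℂ) * z⁻¹ ^ (n - k) := by
    rw [eval_qPoly, Finset.mul_sum]
    refine Finset.sum_congr rfl fun k hk => ?_
    rw [pow_sub₀ _ (inv_ne_zero hz) (Nat.lt_succ_iff.mp (Finset.mem_range.mp hk)), ← inv_pow,
      inv_inv]
    ring
  simp only [hlim, qDiffPoly.eval_eq_sum, qCoeff_eq_neg_one_pow_mul]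
  refine tendsto_finsetSum _ fun k _ => ?_
  exact ((Complex.continuous_ofReal.tendsto _).comp
    ((geomEsymm.tendsto hq0 hq1 k).const_mul _)).mul_const _

end qPoly

theorem stmt_6_general (q : ℝ) (hq0 : 0 < q) (hq1 : q < 1) (n : ℕ) :
    ∀ z : ℂ,
      (C 1 + ∑ k ∈ Finset.Icc 1 n,
          C (((n.factorial / (n - k).factorial : ℕ) : ℂ) *
            (q : ℂ) ^ (k * (k + 1) / 2) / ∏ i ∈ Finset.Icc 1 k, ((q : ℂ) ^ i - 1)) *
          X ^ k : Polynomial ℂ).IsRoot z →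
      ∃ r : ℝ, 0 < r ∧ z = (r : ℂ) := by
  intro z hz
  rw [← qPoly_eq] at hz
  have hz0 : z ≠ 0 := by
    rintro rfl
    simp [IsRoot, eval_qPoly, Finset.sum_range_succ'] at hz
  have him : z⁻¹.im = 0 :=
    im_eq_zero_of_tendsto_eval_zero (qDiffPoly.realRooted q n)
      (qDiffPoly.monic q n) (qDiffPoly.natDegree q n)
      (by simpa [hz.eq_zero] using qDiffPoly.tendsto_eval_inv q n hq0.le hq1 hz0)
  have hz_real : z = (z.re : ℂ) := Complex.ext rfl (by simpa [Complex.inv_im, hz0] using him)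
  refine ⟨z.re, pos_of_sum_mul_pow_eq_zero (a := qCoeff q n) (N := n) (by simp)
    (neg_one_pow_mul_qCoeff_nonneg q n hq0.le hq1) ?_, hz_real⟩
  have hz_eval := hz.eq_zero
  rw [hz_real, eval_qPoly] at hz_eval
  exact_mod_cast hz_eval

/-- For `0 < q < 1` and `n ≥ 1`, the polynomial
`P_n(z) = 1 + ∑_{k=1}^n (n!/(n-k)!) q^{k(k+1)/2}/((q-1)⋯(qᵏ-1)) zᵏ`
has only real positive zeroes. -/
theorem stmt_6 (q : ℝ) (hq0 : 0 < q) (hq1 : q < 1) (n : ℕ) (hn : 1 ≤ n) :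
    ∀ z : ℂ,
      (C 1 + ∑ k ∈ Finset.Icc 1 n,
          C (((n.factorial / (n - k).factorial : ℕ) : ℂ) *
            (q : ℂ) ^ (k * (k + 1) / 2) / ∏ i ∈ Finset.Icc 1 k, ((q : ℂ) ^ i - 1)) *
          X ^ k : Polynomial ℂ).IsRoot z →
      ∃ r : ℝ, 0 < r ∧ z = (r : ℂ) :=
  stmt_6_general q hq0 hq1 n
end

section
/- Let 0 < α < 1 and define V_α on L²(0,1) by (V_α f)(x) = ∫_0^{x^α} f(t) dt. For each n ∈ ℕ, the function f_{n+1}(x) = x^{α/(1-α)} ( (ln x)^n + ∑_{k=1}^n (n!/(n-k)!) · α^{k(k-1)/2}(1-α)^k / ((1-α)(1-α²)⋯(1-α^k)) · (ln x)^{n-k} ) belongs to L²(0,1) and satisfies V_α f_{n+1} = (1-α)α^n f_{n+1}. -/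
/-!
Write `f = x ^ β · P(log x)` with `β = α / (1 - α)` and `P(u) = ∑ c_k u^(n-k)`. With
`γ = 1 / (1 - α) = β + 1` and `d_k = (1 - α) α^k c_k`, the function `F(t) = t ^ γ · Q(log t)`,
`Q(u) = ∑ d_k u^(n-k)`, satisfies `F' = t ^ β · (γ Q + Q')(log t)`, and `γ Q + Q' = P` is
exactly the recursion `(1 - α^(k+1)) c_(k+1) = (n - k) α^k (1 - α) c_k` of the coefficients.
Since `F(0) = 0`, `V_α f (x) = F(x ^ α) = x ^ β · Q(α log x) = (1 - α) α^n f(x)`.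
As `x ^ r (log x)^m → 0` at `0⁺`, `f` is continuous on `[0, 1]`, hence in `L²(0, 1)`.
-/

open MeasureTheory Filter Finset Real
open scoped Topology ENNReal

theorem ContinuousOn.memLp_restrict_of_subset_isCompact {X E : Type*} [TopologicalSpace X]
    [MeasurableSpace X] [OpensMeasurableSpace X] [NormedAddCommGroup E] {μ : Measure X}
    [IsFiniteMeasureOnCompacts μ] {f : X → E} {s t : Set X} {p : ℝ≥0∞} (hf : ContinuousOn f s)
    (hs : IsCompact s) (ht : MeasurableSet t) (hts : t ⊆ s) : MemLp f p (μ.restrict t) := by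
  obtain ⟨C, hC⟩ := hs.exists_bound_of_continuousOn hf
  have : IsFiniteMeasure (μ.restrict t) :=
    isFiniteMeasure_restrict.2 ((measure_mono hts).trans_lt hs.measure_lt_top).ne
  exact .of_bound (hf.aestronglyMeasurable_of_subset_isCompact hs ht hts) C
    (ae_restrict_of_forall_mem ht fun x hx => hC x (hts hx))

lemma tendsto_rpow_mul_log_pow_nhdsGT_zero {r : ℝ} (hr : 0 < r) (m : ℕ) :
    Tendsto (fun x : ℝ => x ^ r * log x ^ m) (𝓝[>] 0) (𝓝 0) := by
  have h := (isLittleO_abs_log_rpow_rpow_nhdsGT_zero (m : ℝ)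
    (neg_lt_zero.2 hr)).tendsto_div_nhds_zero
  refine tendsto_zero_iff_norm_tendsto_zero.2 (h.congr' ?_)
  filter_upwards [self_mem_nhdsWithin] with x (hx : 0 < x)
  rw [norm_mul, norm_pow, Real.norm_eq_abs, Real.norm_eq_abs, abs_of_nonneg (rpow_nonneg hx.le _),
    rpow_natCast, rpow_neg hx.le, div_inv_eq_mul, mul_comm]

lemma continuousOn_rpow_mul_log_pow {r : ℝ} (hr : 0 < r) (m : ℕ) :
    ContinuousOn (fun x : ℝ => x ^ r * log x ^ m) (Set.Ici 0) := by
  intro x hx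
  rcases (Set.mem_Ici.1 hx).eq_or_lt with rfl | hx0
  · rw [← continuousWithinAt_Ioi_iff_Ici, ContinuousWithinAt, zero_rpow hr.ne', zero_mul]
    exact tendsto_rpow_mul_log_pow_nhdsGT_zero hr m
  · exact ((continuousAt_rpow_const x r (Or.inl hx0.ne')).mul
      ((continuousAt_log hx0.ne').pow m)).continuousWithinAt

noncomputable def rpowMulLogPoly (r : ℝ) (e : ℕ → ℝ) (n : ℕ) (x : ℝ) : ℝ :=
  x ^ r * ∑ k ∈ range (n + 1), e k * log x ^ (n - k)

section rpowMulLogPoly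

variable {r : ℝ} (e : ℕ → ℝ) (n : ℕ)

lemma rpowMulLogPoly_zero (hr : r ≠ 0) : rpowMulLogPoly r e n 0 = 0 := by
  rw [rpowMulLogPoly, zero_rpow hr, zero_mul]

lemma continuousOn_rpowMulLogPoly (hr : 0 < r) :
    ContinuousOn (rpowMulLogPoly r e n) (Set.Ici 0) := by
  have h : rpowMulLogPoly r e n =
      fun x => ∑ k ∈ range (n + 1), e k * (x ^ r * log x ^ (n - k)) := by
    ext x
    rw [rpowMulLogPoly, mul_sum]
    exact sum_congr rfl fun k _ => by ring
  rw [h]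
  exact continuousOn_finsetSum _ fun k _ => (continuousOn_rpow_mul_log_pow hr _).const_smul (e k)

lemma hasDerivAt_rpowMulLogPoly (r : ℝ) {t : ℝ} (ht : 0 < t) :
    HasDerivAt (rpowMulLogPoly r e n) (t ^ (r - 1) * ∑ k ∈ range (n + 1),
      e k * (r * log t ^ (n - k) + (n - k : ℕ) * log t ^ (n - k - 1))) t := by
  have hsum : HasDerivAt (fun s => ∑ k ∈ range (n + 1), e k * log s ^ (n - k))
      (∑ k ∈ range (n + 1), e k * ((n - k : ℕ) * log t ^ (n - k - 1) * t⁻¹)) t :=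
    .fun_sum fun k _ => ((hasDerivAt_log ht.ne').pow (n - k)).const_mul (e k)
  refine ((hasDerivAt_rpow_const (p := r) (Or.inl ht.ne')).mul hsum).congr_deriv ?_
  rw [rpow_sub_one ht.ne', mul_sum, mul_sum, mul_sum, ← sum_add_distrib]
  refine sum_congr rfl fun k _ => ?_
  field_simp

end rpowMulLogPoly

noncomputable def eigenCoeff (α : ℝ) (n k : ℕ) : ℝ :=
  ((n.factorial / (n - k).factorial : ℕ) : ℝ) *
    (α ^ (k * (k - 1) / 2) * (1 - α) ^ k / ∏ i ∈ Icc 1 k, (1 - α ^ i))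

noncomputable def primitiveCoeff (α : ℝ) (n k : ℕ) : ℝ := (1 - α) * α ^ k * eigenCoeff α n k

section coefficients

variable {α : ℝ} (n : ℕ)

lemma eigenCoeff_zero : eigenCoeff α n 0 = 1 := by
  simp [eigenCoeff, Nat.div_self n.factorial_pos]

lemma eigenCoeff_succ (hα0 : 0 ≤ α) (hα1 : α < 1) {k : ℕ} (hk : k < n) :
    (1 - α ^ (k + 1)) * eigenCoeff α n (k + 1) =
      (n - k : ℕ) * α ^ k * (1 - α) * eigenCoeff α n k := by
  have hk1 : 1 - α ^ (k + 1) ≠ 0 := (sub_pos.2 (pow_lt_one₀ hα0 hα1 (by omega))).ne'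
  rw [eigenCoeff, eigenCoeff, Nat.triangle_succ, prod_Icc_succ_top (by omega),
    ← Nat.descFactorial_eq_div hk, ← Nat.descFactorial_eq_div hk.le, Nat.descFactorial_succ]
  field_simp
  push_cast
  ring

lemma sum_primitiveCoeff_mul_pow (u : ℝ) :
    ∑ k ∈ range (n + 1), primitiveCoeff α n k * (α * u) ^ (n - k)
      = (1 - α) * α ^ n * ∑ k ∈ range (n + 1), eigenCoeff α n k * u ^ (n - k) := by
  rw [mul_sum]
  refine sum_congr rfl fun k hk => ?_
  rw [primitiveCoeff, mul_pow, ← pow_sub_mul_pow α (Nat.lt_succ_iff.1 (mem_range.1 hk))]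
  ring

lemma sum_primitiveCoeff_mul_deriv (hα0 : 0 ≤ α) (hα1 : α < 1) (u : ℝ) :
    ∑ k ∈ range (n + 1), primitiveCoeff α n k *
        ((1 - α)⁻¹ * u ^ (n - k) + (n - k : ℕ) * u ^ (n - k - 1))
      = ∑ k ∈ range (n + 1), eigenCoeff α n k * u ^ (n - k) := by
  have h1α : 1 - α ≠ 0 := (sub_pos.2 hα1).ne'
  have hshift : ∑ k ∈ range (n + 1), primitiveCoeff α n k * ((n - k : ℕ) * u ^ (n - k - 1))
      = ∑ k ∈ range (n + 1), (1 - α ^ k) * eigenCoeff α n k * u ^ (n - k) := by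
    rw [sum_range_succ, sum_range_succ']
    simp only [Nat.sub_self, Nat.cast_zero, zero_mul, mul_zero, add_zero, pow_zero, sub_self]
    refine sum_congr rfl fun k hk => ?_
    have hkn := mem_range.1 hk
    rw [eigenCoeff_succ n hα0 hα1 hkn, primitiveCoeff, show n - k - 1 = n - (k + 1) by omega]
    ring
  calc _ = ∑ k ∈ range (n + 1), α ^ k * eigenCoeff α n k * u ^ (n - k)
        + ∑ k ∈ range (n + 1), primitiveCoeff α n k * ((n - k : ℕ) * u ^ (n - k - 1)) := by
        rw [← sum_add_distrib]
        refine sum_congr rfl fun k _ => ?_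
        rw [primitiveCoeff]
        field_simp
    _ = _ := by
        rw [hshift, ← sum_add_distrib]
        exact sum_congr rfl fun k _ => by ring

lemma sum_range_eigenCoeff_mul_pow (u : ℝ) :
    ∑ k ∈ range (n + 1), eigenCoeff α n k * u ^ (n - k)
      = u ^ n + ∑ k ∈ Icc 1 n, eigenCoeff α n k * u ^ (n - k) := by
  rw [range_eq_Ico, sum_eq_sum_Ico_succ_bot (by omega : 0 < n + 1), Ico_add_one_right_eq_Icc,
    eigenCoeff_zero, one_mul, Nat.sub_zero]

end coefficients

section eigenfunction

variable {α : ℝ} (n : ℕ)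

lemma hasDerivAt_rpowMulLogPoly_primitiveCoeff (hα0 : 0 ≤ α) (hα1 : α < 1) {t : ℝ} (ht : 0 < t) :
    HasDerivAt (rpowMulLogPoly (1 - α)⁻¹ (primitiveCoeff α n) n)
      (rpowMulLogPoly (α / (1 - α)) (eigenCoeff α n) n t) t := by
  have h1α : 1 - α ≠ 0 := (sub_pos.2 hα1).ne'
  refine (hasDerivAt_rpowMulLogPoly _ n _ ht).congr_deriv ?_
  rw [rpowMulLogPoly, ← sum_primitiveCoeff_mul_deriv n hα0 hα1,
    show (1 - α)⁻¹ - 1 = α / (1 - α) by field_simp; ring]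

lemma rpowMulLogPoly_primitiveCoeff_rpow (hα0 : 0 < α) (hα1 : α < 1) {x : ℝ} (hx : 0 ≤ x) :
    rpowMulLogPoly (1 - α)⁻¹ (primitiveCoeff α n) n (x ^ α)
      = (1 - α) * α ^ n * rpowMulLogPoly (α / (1 - α)) (eigenCoeff α n) n x := by
  rcases hx.eq_or_lt with rfl | hx0
  · rw [zero_rpow hα0.ne', rpowMulLogPoly_zero _ _ (by positivity),
      rpowMulLogPoly_zero _ _ (by positivity), mul_zero]
  · rw [rpowMulLogPoly, rpowMulLogPoly, ← rpow_mul hx, log_rpow hx0, sum_primitiveCoeff_mul_pow,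
      ← div_eq_mul_inv]
    ring

lemma integral_rpowMulLogPoly_eigenCoeff (hα0 : 0 < α) (hα1 : α < 1) {y : ℝ} (hy : 0 ≤ y) :
    ∫ t in 0..y, rpowMulLogPoly (α / (1 - α)) (eigenCoeff α n) n t
      = rpowMulLogPoly (1 - α)⁻¹ (primitiveCoeff α n) n y := by
  have hcont : ContinuousOn (rpowMulLogPoly (α / (1 - α)) (eigenCoeff α n) n) (Set.uIcc 0 y) := by
    rw [Set.uIcc_of_le hy]
    exact (continuousOn_rpowMulLogPoly _ n (by positivity)).mono Set.Icc_subset_Ici_self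
  rw [intervalIntegral.integral_eq_sub_of_hasDeriv_right_of_le hy
    ((continuousOn_rpowMulLogPoly _ n (by positivity)).mono Set.Icc_subset_Ici_self)
    (fun t ht => (hasDerivAt_rpowMulLogPoly_primitiveCoeff n hα0.le hα1 ht.1).hasDerivWithinAt)
    hcont.intervalIntegrable, rpowMulLogPoly_zero _ _ (by positivity), sub_zero]

end eigenfunction

/-- For `0 < α < 1`, the function `f_{n+1}` belongs to `L²(0,1)` and is an eigenfunction of
`(V_α f)(x) = ∫_0^{x^α} f(t) dt` with eigenvalue `(1-α)α^n`. -/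
theorem stmt_7 (α : ℝ) (hα0 : 0 < α) (hα1 : α < 1) (n : ℕ)
    (f : ℝ → ℝ)
    (hf : ∀ x : ℝ, f x = x ^ (α / (1 - α)) *
      ((Real.log x) ^ n + ∑ k ∈ Finset.Icc 1 n,
        ((n.factorial / (n - k).factorial : ℕ) : ℝ) *
          (α ^ (k * (k - 1) / 2) * (1 - α) ^ k / ∏ i ∈ Finset.Icc 1 k, (1 - α ^ i)) *
          (Real.log x) ^ (n - k))) :
    MemLp f 2 (volume.restrict (Set.Ioo (0:ℝ) 1)) ∧
    ∀ x ∈ Set.Icc (0:ℝ) 1, (∫ t in (0:ℝ)..(x ^ α), f t) = (1 - α) * α ^ n * f x := by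
  have hf_eq : f = rpowMulLogPoly (α / (1 - α)) (eigenCoeff α n) n := by
    ext x
    rw [hf, rpowMulLogPoly, sum_range_eigenCoeff_mul_pow]
    rfl
  subst hf_eq
  have hcont : ContinuousOn (rpowMulLogPoly (α / (1 - α)) (eigenCoeff α n) n) (Set.Icc 0 1) :=
    (continuousOn_rpowMulLogPoly _ n (div_pos hα0 (sub_pos.2 hα1))).mono Set.Icc_subset_Ici_self
  refine ⟨hcont.memLp_restrict_of_subset_isCompact isCompact_Icc measurableSet_Ioo
    Set.Ioo_subset_Icc_self, fun x hx => ?_⟩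
  rw [integral_rpowMulLogPoly_eigenCoeff n hα0 hα1 (rpow_nonneg hx.1 α),
    rpowMulLogPoly_primitiveCoeff_rpow n hα0 hα1 hx.1]
end

section
/- For 0 < α < 1 and any n ∈ ℕ, the identity ∑_{k=1}^∞ (-1)^{k-1} α^{k(k-1-2n)/2} / ((1-α)(1-α²)⋯(1-α^k)) = 1 holds. -/
set_option maxHeartbeats 800000

open Filter

namespace Stmt10

noncomputable def P (α : ℝ) (k : ℕ) : ℝ := ∏ i ∈ Finset.Icc 1 k, (1 - α ^ i)

def T : ℕ → ℕ
  | 0 => 0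
  | k + 1 => T k + k

noncomputable def a (α : ℝ) (k : ℕ) : ℝ := (-1) ^ k * α ^ T k / P α k

lemma T_eq (k : ℕ) : 2 * T (k + 1) = (k + 1) * k := by
  induction k with
  | zero => rfl
  | succ m ih =>
      have : T (m + 2) = T (m + 1) + (m + 1) := rfl
      rw [this, Nat.mul_add, ih]
      ring

variable {α : ℝ}

lemma P_pos (h0 : 0 < α) (h1 : α < 1) (k : ℕ) : 0 < P α k := by
  apply Finset.prod_pos
  intro i hi
  have hi1 : i ≠ 0 := by simp only [Finset.mem_Icc] at hi; omega
  have : α ^ i < 1 := pow_lt_one₀ h0.le h1 hi1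
  linarith

lemma P_succ (k : ℕ) : P α (k + 1) = P α k * (1 - α ^ (k + 1)) := by
  unfold P
  rw [Finset.prod_Icc_succ_top (by omega)]

lemma a_succ (h0 : 0 < α) (h1 : α < 1) (k : ℕ) :
    a α (k + 1) = a α k * (-(α ^ k) / (1 - α ^ (k + 1))) := by
  have hP := (P_pos h0 h1 k).ne'
  have hQ : (1 : ℝ) - α ^ (k + 1) > 0 := by
    have : α ^ (k + 1) < 1 := pow_lt_one₀ h0.le h1 k.succ_ne_zero
    linarith
  unfold a
  rw [P_succ]
  have hT : T (k + 1) = T k + k := rfl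
  rw [hT]
  field_simp
  ring

lemma a_rec (h0 : 0 < α) (h1 : α < 1) (k : ℕ) :
    a α (k + 1) * α ^ (k + 1) - a α k * α ^ k = a α (k + 1) := by
  have hQ : (1 : ℝ) - α ^ (k + 1) ≠ 0 := by
    have : α ^ (k + 1) < 1 := pow_lt_one₀ h0.le h1 k.succ_ne_zero
    linarith
  rw [a_succ h0 h1 k]
  field_simp
  ring

lemma summable_term (h0 : 0 < α) (h1 : α < 1) (z : ℝ) :
    Summable (fun k => a α k * z ^ k) := by
  apply summable_of_ratio_norm_eventually_le (r := 1/2) (by norm_num)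
  have htend : Tendsto (fun k : ℕ => α ^ k * |z|) atTop (nhds 0) := by
    have := tendsto_pow_atTop_nhds_zero_of_lt_one h0.le h1
    simpa using this.mul_const |z|
  have hev : ∀ᶠ k : ℕ in atTop, α ^ k * |z| ≤ (1 - α) / 2 := by
    have hlt : (0:ℝ) < (1 - α) / 2 := by linarith
    exact htend.eventually_le_const hlt
  filter_upwards [hev] with k hk
  have hQ : (0:ℝ) < 1 - α ^ (k + 1) := by
    have : α ^ (k + 1) < 1 := pow_lt_one₀ h0.le h1 k.succ_ne_zero
    linarith
  have hQα : 1 - α ≤ 1 - α ^ (k + 1) := by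
    have h : α ^ (k + 1) ≤ α ^ 1 := pow_le_pow_of_le_one h0.le h1.le (by omega)
    rw [pow_one] at h
    linarith
  have key : a α (k + 1) * z ^ (k + 1) =
      (a α k * z ^ k) * (-(α ^ k) / (1 - α ^ (k + 1)) * z) := by
    rw [a_succ h0 h1 k, pow_succ]; ring
  rw [key, norm_mul]
  have hfac : ‖-(α ^ k) / (1 - α ^ (k + 1)) * z‖ ≤ 1 / 2 := by
    rw [norm_mul, norm_div, norm_neg]
    have h1n : ‖α ^ k‖ = α ^ k := by
      rw [Real.norm_eq_abs, abs_of_nonneg (pow_nonneg h0.le k)]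
    have h2n : ‖(1:ℝ) - α ^ (k + 1)‖ = 1 - α ^ (k + 1) := by
      rw [Real.norm_eq_abs, abs_of_pos hQ]
    rw [h1n, h2n, Real.norm_eq_abs]
    rw [div_mul_eq_mul_div, div_le_iff₀ hQ]
    calc α ^ k * |z| ≤ (1 - α) / 2 := hk
      _ ≤ 1 / 2 * (1 - α ^ (k + 1)) := by nlinarith
  calc ‖a α k * z ^ k‖ * ‖-(α ^ k) / (1 - α ^ (k + 1)) * z‖
      ≤ ‖a α k * z ^ k‖ * (1/2) := by
        exact mul_le_mul_of_nonneg_left hfac (norm_nonneg _)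
    _ = 1/2 * ‖a α k * z ^ k‖ := by ring

lemma feq (h0 : 0 < α) (h1 : α < 1) (z : ℝ) :
    (∑' k, a α k * z ^ k) = (1 - z) * ∑' k, a α k * (α * z) ^ k := by
  have hs' : Summable (fun k => a α k * α ^ k * z ^ k) := by
    have := summable_term h0 h1 (α * z)
    apply this.congr
    intro k
    rw [mul_pow]; ring
  have hshift : Summable (fun k => a α (k + 1) * α ^ (k + 1) * z ^ (k + 1)) :=
    (summable_nat_add_iff 1).mpr hs'
  have hmul : Summable (fun k => a α k * α ^ k * z ^ (k + 1)) := by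
    have := hs'.mul_right z
    apply this.congr
    intro k
    rw [pow_succ]; ring
  have hfz : (∑' k, a α k * (α * z) ^ k) = ∑' k, a α k * α ^ k * z ^ k := by
    apply tsum_congr
    intro k
    rw [mul_pow]; ring
  rw [Summable.tsum_eq_zero_add (summable_term h0 h1 z)]
  have ha0 : a α 0 * z ^ 0 = 1 := by simp [a, T, P]
  rw [ha0]
  have step1 : ∀ k : ℕ, a α (k + 1) * z ^ (k + 1) =
      a α (k + 1) * α ^ (k + 1) * z ^ (k + 1) - a α k * α ^ k * z ^ (k + 1) := by
    intro k
    rw [← sub_mul, a_rec h0 h1 k]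
  rw [tsum_congr step1, Summable.tsum_sub hshift hmul]
  have e1 : (∑' k, a α (k + 1) * α ^ (k + 1) * z ^ (k + 1)) =
      (∑' k, a α k * α ^ k * z ^ k) - 1 := by
    rw [Summable.tsum_eq_zero_add hs']
    have : a α 0 * α ^ 0 * z ^ 0 = 1 := by simp [a, T, P]
    rw [this]; ring
  have e2 : (∑' k, a α k * α ^ k * z ^ (k + 1)) =
      (∑' k, a α k * α ^ k * z ^ k) * z := by
    rw [← tsum_mul_right]
    apply tsum_congr
    intro k
    rw [pow_succ]; ring
  rw [e1, e2, hfz]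
  ring

lemma f_zero (h0 : 0 < α) (h1 : α < 1) (n : ℕ) :
    (∑' k, a α k * ((α ^ (-(n : ℤ)) : ℝ)) ^ k) = 0 := by
  induction n with
  | zero =>
      have : (α ^ (-(0:ℕ) : ℤ) : ℝ) = 1 := by norm_num
      rw [this, feq h0 h1 1]
      ring
  | succ m ih =>
      have hne : α ≠ 0 := h0.ne'
      have hz : α * α ^ (-((m:ℤ) + 1)) = α ^ (-(m : ℤ)) := by
        rw [show (-(m:ℤ)) = 1 + (-((m:ℤ) + 1)) by ring, zpow_add₀ hne, zpow_one]
      rw [feq h0 h1 (α ^ (-((m + 1 : ℕ) : ℤ)))]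
      push_cast
      rw [hz, ih]
      ring

end Stmt10

/-- For `0 < α < 1` and `n ∈ ℕ`:
`∑_{k≥1} (-1)^{k-1} α^{k(k-1-2n)/2}/((1-α)⋯(1-αᵏ)) = 1`. -/
theorem stmt_10 (α : ℝ) (hα0 : 0 < α) (hα1 : α < 1) (n : ℕ) :
    (∑' j : ℕ, (-1 : ℝ) ^ j *
      α ^ ((((j : ℤ) + 1) * ((j : ℤ) - 2 * (n : ℤ))) / 2 : ℤ) /
      ∏ i ∈ Finset.Icc 1 (j + 1), (1 - α ^ i)) = 1 := by
  set z : ℝ := α ^ (-(n : ℤ)) with hzdef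
  have hne : α ≠ 0 := hα0.ne'
  have hf0 := Stmt10.f_zero hα0 hα1 n
  rw [Summable.tsum_eq_zero_add (Stmt10.summable_term hα0 hα1 _)] at hf0
  have ha0 : Stmt10.a α 0 * (α ^ (-(n : ℤ)) : ℝ) ^ 0 = 1 := by
    simp [Stmt10.a, Stmt10.T, Stmt10.P]
  rw [ha0] at hf0
  have htail : (∑' j : ℕ, Stmt10.a α (j + 1) * z ^ (j + 1)) = -1 := by
    rw [hzdef]; linarith
  have hterm : ∀ j : ℕ, (-1 : ℝ) ^ j *
      α ^ ((((j : ℤ) + 1) * ((j : ℤ) - 2 * (n : ℤ))) / 2 : ℤ) /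
      ∏ i ∈ Finset.Icc 1 (j + 1), (1 - α ^ i) =
      -(Stmt10.a α (j + 1) * z ^ (j + 1)) := by
    intro j
    have hTj := Stmt10.T_eq j
    have hexp : ((((j : ℤ) + 1) * ((j : ℤ) - 2 * (n : ℤ))) / 2 : ℤ) =
        (Stmt10.T (j + 1) : ℤ) - (n : ℤ) * ((j : ℤ) + 1) := by
      have h2 : (((j : ℤ) + 1) * ((j : ℤ) - 2 * (n : ℤ))) =
          2 * ((Stmt10.T (j + 1) : ℤ) - (n : ℤ) * ((j : ℤ) + 1)) := by
        have : ((2 * Stmt10.T (j + 1) : ℕ) : ℤ) = ((j : ℤ) + 1) * (j : ℤ) := by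
          rw [hTj]; push_cast; ring
        push_cast at this ⊢
        linarith [this]
      rw [h2, Int.mul_ediv_cancel_left _ (by norm_num : (2:ℤ) ≠ 0)]
    have hzp : z ^ (j + 1) = α ^ (-(n : ℤ) * ((j : ℤ) + 1)) := by
      rw [hzdef, ← zpow_natCast (α ^ (-(n : ℤ))) (j + 1), ← zpow_mul]
      push_cast
      ring_nf
    rw [hexp, hzp]
    unfold Stmt10.a
    have hsplit : (α : ℝ) ^ ((Stmt10.T (j + 1) : ℤ) - (n : ℤ) * ((j : ℤ) + 1)) =
        α ^ (Stmt10.T (j + 1)) * α ^ (-(n : ℤ) * ((j : ℤ) + 1)) := by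
      rw [sub_eq_add_neg, zpow_add₀ hne, zpow_natCast]
      congr 1
      ring_nf
    rw [hsplit]
    show _ / Stmt10.P α (j + 1) = _
    rw [pow_succ]
    ring
  rw [tsum_congr hterm, tsum_neg, htail]
  norm_num
end
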